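/- arXiv:2107.11216 — 2 statements merged into one kernel-verified Lean document; each statement's English description precedes it below -/
import Mathlib

section
/- Let v be a vertex of a finite simple graph G, and let G_v+u be the graph obtained from G by adding one new vertex u adjacent only to v. Then v belongs to no minimum vertex cover of G if and only if τ(G_v+u) = τ(G) + 1. -/
open SimpleGraph

/-- `S` is a dominating set of `G`. -/
def IsDomSet {V : Type*} (G : SimpleGraph V) (S : Finset V) : Prop :=
  ∀ v : V, v ∈ S ∨ ∃ u ∈ S, G.Adj u v

/-- The domination number `γ(G)`. -/
noncomputable def domNum {V : Type*} (G : SimpleGraph V) : ℕ :=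
  sInf {n | ∃ S : Finset V, IsDomSet G S ∧ S.card = n}

/-- `C` is a vertex cover of `G`. -/
def IsVC {V : Type*} (G : SimpleGraph V) (C : Finset V) : Prop :=
  ∀ e ∈ G.edgeSet, ∃ x ∈ C, x ∈ e

/-- The vertex cover number `τ(G)`. -/
noncomputable def tau {V : Type*} (G : SimpleGraph V) : ℕ :=
  sInf {n | ∃ C : Finset V, IsVC G C ∧ C.card = n}

/-- `S` is an independent set of `G`. -/
def IsIndep {V : Type*} (G : SimpleGraph V) (S : Finset V) : Prop :=
  ∀ a ∈ S, ∀ b ∈ S, ¬ G.Adj a b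

/-- The independence number `α(G)`. -/
noncomputable def indepNum {V : Type*} (G : SimpleGraph V) : ℕ :=
  sSup {n | ∃ S : Finset V, IsIndep G S ∧ S.card = n}

/-- The bondage number `b(G)`. -/
noncomputable def bondage {V : Type*} (G : SimpleGraph V) : ℕ :=
  sInf {n | ∃ E' : Finset (Sym2 V), ↑E' ⊆ G.edgeSet ∧ E'.card = n ∧
    domNum (G.deleteEdges ↑E') = domNum G + 1}

/-- The graph `G_v+u` obtained from `G` by adding one new vertex (`none`) adjacent only to `v`. -/
def addLeaf {V : Type*} (G : SimpleGraph V) (v : V) : SimpleGraph (Option V) :=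
  SimpleGraph.fromRel (fun x y =>
    (∃ a b, x = some a ∧ y = some b ∧ G.Adj a b) ∨ (x = some v ∧ y = none))

/-- The graph `G_A+` obtained from `G` by adding, for each `v ∈ A`, one new pendant
vertex adjacent only to `v`. -/
def addLeaves {V : Type*} (G : SimpleGraph V) (A : Finset V) :
    SimpleGraph (V ⊕ {x // x ∈ A}) :=
  SimpleGraph.fromRel (fun x y =>
    (∃ a b, x = Sum.inl a ∧ y = Sum.inl b ∧ G.Adj a b) ∨
    (∃ a : {x // x ∈ A}, x = Sum.inl a.1 ∧ y = Sum.inr a))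

/-- The `3`-subdivision of the edge `uv` of `G`: the edge `uv` is deleted, three new
vertices `u' = Sum.inr 0`, `w = Sum.inr 1`, `v' = Sum.inr 2` are added, together with the
four edges `u u'`, `u' w`, `w v'`, `v' v`. -/
def subdiv3 {V : Type*} (G : SimpleGraph V) (u v : V) : SimpleGraph (V ⊕ Fin 3) :=
  SimpleGraph.fromRel (fun x y =>
    match x, y with
    | Sum.inl a, Sum.inl b => G.Adj a b ∧ s(a, b) ≠ s(u, v)
    | Sum.inl a, Sum.inr i => (a = u ∧ i = 0) ∨ (a = v ∧ i = 2)
    | Sum.inr i, Sum.inr j => (i = 0 ∧ j = 1) ∨ (i = 1 ∧ j = 2)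
    | _, _ => False)

namespace SimpleGraph

variable {V : Type*}

lemma isVC_iff_forall_adj {G : SimpleGraph V} {C : Finset V} :
    IsVC G C ↔ ∀ ⦃a b⦄, G.Adj a b → a ∈ C ∨ b ∈ C := by
  refine ⟨fun h a b hab => ?_, fun h e he => ?_⟩
  · obtain ⟨x, hx, hxe⟩ := h s(a, b) hab
    rcases Sym2.mem_iff.1 hxe with rfl | rfl <;> simp [hx]
  · induction e using Sym2.ind with
    | _ a b =>
      rcases h he with ha | hb
      · exact ⟨a, ha, Sym2.mem_mk_left a b⟩
      · exact ⟨b, hb, Sym2.mem_mk_right a b⟩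

lemma tau_le_card {G : SimpleGraph V} {C : Finset V} (hC : IsVC G C) : tau G ≤ C.card :=
  Nat.sInf_le ⟨C, hC, rfl⟩

lemma exists_isVC_card_eq_tau [Finite V] (G : SimpleGraph V) :
    ∃ C : Finset V, IsVC G C ∧ C.card = tau G := by
  have := Fintype.ofFinite V
  have huniv : IsVC G Finset.univ :=
    isVC_iff_forall_adj.2 fun a _ _ => Or.inl (Finset.mem_univ a)
  exact Nat.sInf_mem (s := {n | ∃ C : Finset V, IsVC G C ∧ C.card = n}) ⟨_, _, huniv, rfl⟩

lemma addLeaf_adj {G : SimpleGraph V} {v : V} {x y : Option V} :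
    (addLeaf G v).Adj x y ↔ (∃ a b, x = some a ∧ y = some b ∧ G.Adj a b) ∨
      (x = some v ∧ y = none) ∨ (x = none ∧ y = some v) := by
  simp only [addLeaf, fromRel_adj]
  aesop (add safe apply Adj.symm)

lemma isVC_addLeaf_iff {G : SimpleGraph V} {v : V} {C : Finset (Option V)} :
    IsVC (addLeaf G v) C ↔
      (∀ ⦃a b⦄, G.Adj a b → some a ∈ C ∨ some b ∈ C) ∧ (some v ∈ C ∨ none ∈ C) := by
  simp only [isVC_iff_forall_adj, addLeaf_adj]
  aesop

lemma isVC_addLeaf_map_some {G : SimpleGraph V} {v : V} {C : Finset V} (hC : IsVC G C)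
    (hv : v ∈ C) : IsVC (addLeaf G v) (C.map Function.Embedding.some) := by
  refine isVC_addLeaf_iff.2 ⟨fun a b hab => ?_, Or.inl (by simpa using hv)⟩
  simpa using isVC_iff_forall_adj.1 hC hab

lemma isVC_addLeaf_insertNone {G : SimpleGraph V} {v : V} {C : Finset V} (hC : IsVC G C) :
    IsVC (addLeaf G v) (Finset.insertNone C) := by
  refine isVC_addLeaf_iff.2 ⟨fun a b hab => ?_, Or.inr Finset.none_mem_insertNone⟩
  simpa only [Finset.some_mem_insertNone] using isVC_iff_forall_adj.1 hC hab

/-- Folding the pendant vertex onto `v` turns a cover of `addLeaf G v` into a cover of `G`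
through `v`. -/
lemma exists_isVC_mem_card_le_of_isVC_addLeaf {G : SimpleGraph V} {v : V}
    {C : Finset (Option V)} (hC : IsVC (addLeaf G v) C) :
    ∃ D : Finset V, IsVC G D ∧ v ∈ D ∧ D.card ≤ C.card := by
  classical
  obtain ⟨hG, hv⟩ := isVC_addLeaf_iff.1 hC
  refine ⟨C.image (Option.getD · v), isVC_iff_forall_adj.2 fun a b hab => ?_, ?_,
    Finset.card_image_le⟩
  · exact (hG hab).imp (Finset.mem_image_of_mem _) (Finset.mem_image_of_mem _)
  · exact hv.elim (Finset.mem_image_of_mem _) (Finset.mem_image_of_mem _)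

lemma tau_addLeaf_le_succ [Finite V] (G : SimpleGraph V) (v : V) :
    tau (addLeaf G v) ≤ tau G + 1 := by
  obtain ⟨C, hC, hcard⟩ := exists_isVC_card_eq_tau G
  calc tau (addLeaf G v) ≤ (Finset.insertNone C).card :=
        tau_le_card (isVC_addLeaf_insertNone hC)
    _ = tau G + 1 := by rw [Finset.card_insertNone, hcard]

lemma tau_addLeaf_le_tau_iff [Finite V] (G : SimpleGraph V) (v : V) :
    tau (addLeaf G v) ≤ tau G ↔ ∃ C : Finset V, IsVC G C ∧ C.card = tau G ∧ v ∈ C := by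
  constructor
  · intro hle
    obtain ⟨C, hC, hcard⟩ := exists_isVC_card_eq_tau (addLeaf G v)
    obtain ⟨D, hD, hvD, hDC⟩ := exists_isVC_mem_card_le_of_isVC_addLeaf hC
    exact ⟨D, hD, le_antisymm (by omega) (tau_le_card hD), hvD⟩
  · rintro ⟨C, hC, hcard, hv⟩
    calc tau (addLeaf G v) ≤ (C.map Function.Embedding.some).card :=
          tau_le_card (isVC_addLeaf_map_some hC hv)
      _ = tau G := by rw [Finset.card_map, hcard]

end SimpleGraph

theorem stmt2_general {V : Type*} [Fintype V] (G : SimpleGraph V) (v : V) :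
    (∀ C : Finset V, IsVC G C → C.card = tau G → v ∉ C) ↔
      tau (addLeaf G v) = tau G + 1 := by
  have hsucc := tau_addLeaf_le_succ G v
  have hle := tau_addLeaf_le_tau_iff G v
  constructor
  · intro hnot
    by_contra hne
    obtain ⟨C, hC, hcard, hv⟩ := hle.1 (by omega)
    exact hnot C hC hcard hv
  · intro heq C hC hcard hv
    have := hle.2 ⟨C, hC, hcard, hv⟩
    omega

/-- `v` belongs to no minimum vertex cover of `G` iff `τ(G_v+u) = τ(G) + 1`. -/
theorem stmt2 {V : Type*} [Fintype V] [DecidableEq V] (G : SimpleGraph V) (v : V) :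
    (∀ C : Finset V, IsVC G C → C.card = tau G → v ∉ C) ↔
      tau (addLeaf G v) = tau G + 1 :=
  stmt2_general G v
end

section
/- Let G be a finite simple graph and let A ⊆ V(G). There exists a minimum dominating set S of G with A ⊆ S if and only if γ(G_A+) = γ(G), where G_A+ is the graph obtained from G by adding, for each vertex v ∈ A, one new vertex adjacent only to v. -/
open SimpleGraph

/-!
Projecting every pendant vertex of `G_A+` onto its neighbour turns a dominating set of `G_A+`
into a dominating set of `G` that is no larger and contains `A`, since each pendant vertex is
dominated by itself or by its neighbour; hence `γ(G) ≤ γ(G_A+)`. Conversely a dominating set of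
`G` containing `A` already dominates every pendant vertex of `G_A+`.
-/

section Domination

variable {W : Type*} (H : SimpleGraph W)

lemma domNum_le_card {S : Finset W} (hS : IsDomSet H S) : domNum H ≤ S.card :=
  Nat.sInf_le ⟨S, hS, rfl⟩

lemma exists_isDomSet_card_eq_domNum [Fintype W] :
    ∃ S : Finset W, IsDomSet H S ∧ S.card = domNum H :=
  Nat.sInf_mem (s := {n | ∃ S : Finset W, IsDomSet H S ∧ S.card = n})
    ⟨_, Finset.univ, fun v => Or.inl (Finset.mem_univ v), rfl⟩

end Domination

namespace addLeaves

variable {V : Type*} (G : SimpleGraph V) (A : Finset V)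

@[simp]
lemma adj_inl_inl {a b : V} : (addLeaves G A).Adj (Sum.inl a) (Sum.inl b) ↔ G.Adj a b := by
  simp only [addLeaves, fromRel_adj, Sum.inl.injEq, reduceCtorEq, and_false, exists_false,
    or_false, ne_eq]
  constructor
  · rintro ⟨-, ⟨x, y, rfl, rfl, h⟩ | ⟨x, y, rfl, rfl, h⟩⟩
    exacts [h, h.symm]
  · intro h
    exact ⟨h.ne, Or.inl ⟨a, b, rfl, rfl, h⟩⟩

@[simp]
lemma adj_inl_inr {a : V} {b : {x // x ∈ A}} :
    (addLeaves G A).Adj (Sum.inl a) (Sum.inr b) ↔ a = b.1 := by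
  simp only [addLeaves, fromRel_adj]
  aesop

variable {G A} in
lemma isDomSet_map_inl {S : Finset V} (hS : IsDomSet G S) (hAS : A ⊆ S) :
    IsDomSet (addLeaves G A) (S.map .inl) := by
  rintro (v | b)
  · rcases hS v with hv | ⟨u, hu, hadj⟩
    · exact Or.inl (Finset.mem_map_of_mem _ hv)
    · exact Or.inr ⟨_, Finset.mem_map_of_mem _ hu, (adj_inl_inl G A).2 hadj⟩
  · exact Or.inr ⟨_, Finset.mem_map_of_mem _ (hAS b.2), (adj_inl_inr G A).2 rfl⟩

variable [DecidableEq V]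

def proj : V ⊕ {x // x ∈ A} → V := Sum.elim id Subtype.val

variable {G A}

lemma isDomSet_image_proj {T : Finset (V ⊕ {x // x ∈ A})} (hT : IsDomSet (addLeaves G A) T) :
    IsDomSet G (T.image (proj A)) := by
  intro v
  rcases hT (Sum.inl v) with hv | ⟨u | b, hu, hadj⟩
  · exact Or.inl (Finset.mem_image_of_mem _ hv)
  · exact Or.inr ⟨u, Finset.mem_image_of_mem (proj A) hu, (adj_inl_inl G A).1 hadj⟩
  · rw [adj_comm, adj_inl_inr] at hadj
    exact Or.inl (Finset.mem_image.2 ⟨Sum.inr b, hu, hadj.symm⟩)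

lemma subset_image_proj {T : Finset (V ⊕ {x // x ∈ A})} (hT : IsDomSet (addLeaves G A) T) :
    A ⊆ T.image (proj A) := by
  intro a ha
  rcases hT (Sum.inr ⟨a, ha⟩) with hmem | ⟨u | b, hu, hadj⟩
  · exact Finset.mem_image.2 ⟨_, hmem, rfl⟩
  · rw [adj_inl_inr] at hadj
    exact Finset.mem_image.2 ⟨_, hu, hadj⟩
  · simp [addLeaves] at hadj

variable [Fintype V]

lemma domNum_le_domNum : domNum G ≤ domNum (addLeaves G A) := by
  obtain ⟨T, hT, hcard⟩ := exists_isDomSet_card_eq_domNum (addLeaves G A)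
  calc domNum G ≤ (T.image (proj A)).card := domNum_le_card G (isDomSet_image_proj hT)
    _ ≤ T.card := Finset.card_image_le
    _ = domNum (addLeaves G A) := hcard

end addLeaves

open addLeaves in
/-- There is a minimum dominating set of `G` containing `A` iff `γ(G_A+) = γ(G)`. -/
theorem stmt3 {V : Type*} [Fintype V] [DecidableEq V] (G : SimpleGraph V) (A : Finset V) :
    (∃ S : Finset V, IsDomSet G S ∧ S.card = domNum G ∧ A ⊆ S) ↔
      domNum (addLeaves G A) = domNum G := by
  constructor
  · rintro ⟨S, hS, hcard, hAS⟩
    refine le_antisymm ?_ domNum_le_domNum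
    calc domNum (addLeaves G A) ≤ (S.map .inl).card := domNum_le_card _ (isDomSet_map_inl hS hAS)
      _ = domNum G := by rw [Finset.card_map, hcard]
  · intro h
    obtain ⟨T, hT, hcard⟩ := exists_isDomSet_card_eq_domNum (addLeaves G A)
    have hdom := isDomSet_image_proj hT
    refine ⟨T.image (proj A), hdom, le_antisymm ?_ (domNum_le_card G hdom), subset_image_proj hT⟩
    calc (T.image (proj A)).card ≤ T.card := Finset.card_image_le
      _ = domNum G := hcard.trans h
end
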